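/- arXiv:1709.01809 — 6 statements merged into one kernel-verified Lean document; each statement's English description precedes it below -/
import Mathlib

section
/- Let H be an M×N real matrix, y ∈ ℝ^M, γ > 0, S ⊆ ℝ^N, and P : ℝ^N → S a map satisfying the local obtuse-angle condition: for every x ∈ ℝ^N there exists ε > 0 such that ⟨z − P(x), x − P(x)⟩ ≤ 0 for all z ∈ S with ‖z − P(x)‖ ≤ ε. Then every fixed point x* of the map G(x) = P(x − γ Hᵀ H x + γ Hᵀ y) is a local minimizer of ‖H x − y‖² over S, i.e. there exists ε > 0 such that ‖H x* − y‖ ≤ ‖H z − y‖ for all z ∈ S with ‖z − x*‖ ≤ ε. -/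
/-!
With `A` the linear map of `H`, the gradient step `u = x* - γ Aᵀ(A x* - y)` satisfies `P u = x*`
and `u - x* = γ Aᵀ(y - A x*)`. The obtuse-angle condition at `u` then says
`⟪A z - A x*, y - A x*⟫ ≤ 0` for `z ∈ S` near `x*`: the angle at `A x*` in the triangle
`y, A x*, A z` is obtuse, so `A z` is at least as far from `y` as `A x*` is.
-/

open Matrix
open scoped RealInnerProductSpace

theorem norm_sub_le_norm_sub_of_inner_nonneg {F : Type*} [NormedAddCommGroup F]
    [InnerProductSpace ℝ F] {v w y : F} (h : 0 ≤ ⟪w - y, v - w⟫) :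
    ‖w - y‖ ≤ ‖v - y‖ := by
  have hexpand : ‖v - y‖ ^ 2 = ‖w - y‖ ^ 2 + 2 * ⟪w - y, v - w⟫ + ‖v - w‖ ^ 2 := by
    rw [show v - y = (w - y) + (v - w) by abel, norm_add_sq_real]
  exact (sq_le_sq₀ (norm_nonneg _) (norm_nonneg _)).1 (by nlinarith [sq_nonneg ‖v - w‖])

theorem norm_apply_sub_le_of_inner_smul_adjoint_nonpos {E F : Type*}
    [NormedAddCommGroup E] [InnerProductSpace ℝ E] [FiniteDimensional ℝ E]
    [NormedAddCommGroup F] [InnerProductSpace ℝ F] [FiniteDimensional ℝ F]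
    (A : E →ₗ[ℝ] F) {γ : ℝ} (hγ : 0 < γ) {x z : E} {y : F}
    (h : ⟪z - x, γ • A.adjoint (y - A x)⟫ ≤ 0) :
    ‖A x - y‖ ≤ ‖A z - y‖ := by
  rw [real_inner_smul_right, LinearMap.adjoint_inner_right, map_sub] at h
  have hobtuse : ⟪A z - A x, y - A x⟫ ≤ 0 := nonpos_of_mul_nonpos_right h hγ
  refine norm_sub_le_norm_sub_of_inner_nonneg ?_
  rw [← neg_sub y, inner_neg_left, real_inner_comm]
  exact neg_nonneg.2 hobtuse

theorem fixed_point_is_local_minimizer_general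
    {M N : ℕ} (H : Matrix (Fin M) (Fin N) ℝ) (y : EuclideanSpace ℝ (Fin M))
    (γ : ℝ) (hγ : 0 < γ)
    (S : Set (EuclideanSpace ℝ (Fin N)))
    (P : EuclideanSpace ℝ (Fin N) → EuclideanSpace ℝ (Fin N))
    (hlocal : ∀ x : EuclideanSpace ℝ (Fin N), ∃ ε > 0,
      ∀ z ∈ S, ‖z - P x‖ ≤ ε → (inner ℝ (z - P x) (x - P x) : ℝ) ≤ 0)
    (xstar : EuclideanSpace ℝ (Fin N))
    (hfix : P (xstar - γ • (Matrix.toEuclideanLin Hᵀ (Matrix.toEuclideanLin H xstar))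
        + γ • (Matrix.toEuclideanLin Hᵀ y)) = xstar) :
    ∃ ε > 0, ∀ z ∈ S, ‖z - xstar‖ ≤ ε →
      ‖Matrix.toEuclideanLin H xstar - y‖ ≤ ‖Matrix.toEuclideanLin H z - y‖ := by
  set A := toEuclideanLin H
  have hadjoint : toEuclideanLin Hᵀ = A.adjoint := by
    rw [← conjTranspose_eq_transpose_of_trivial]
    exact toEuclideanLin_conjTranspose_eq_adjoint H
  set u := xstar - γ • toEuclideanLin Hᵀ (A xstar) + γ • toEuclideanLin Hᵀ y
  have hstep : u - xstar = γ • A.adjoint (y - A xstar) := by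
    simp only [u, hadjoint, map_sub]
    module
  obtain ⟨ε, hε, hobtuse⟩ := hlocal u
  refine ⟨ε, hε, fun z hz hzx => ?_⟩
  have hangle := hobtuse z hz (hfix ▸ hzx)
  rw [hfix, hstep] at hangle
  exact norm_apply_sub_le_of_inner_smul_adjoint_nonpos A hγ hangle

/-- Every fixed point of `G x = P (x - γ Hᵀ H x + γ Hᵀ y)`, where `P` satisfies the
local obtuse-angle condition w.r.t. `S`, is a local minimizer of `‖Hx - y‖²` over `S`. -/
theorem fixed_point_is_local_minimizer
    {M N : ℕ} (H : Matrix (Fin M) (Fin N) ℝ) (y : EuclideanSpace ℝ (Fin M))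
    (γ : ℝ) (hγ : 0 < γ)
    (S : Set (EuclideanSpace ℝ (Fin N)))
    (P : EuclideanSpace ℝ (Fin N) → EuclideanSpace ℝ (Fin N))
    (hPS : ∀ x, P x ∈ S)
    (hlocal : ∀ x : EuclideanSpace ℝ (Fin N), ∃ ε > 0,
      ∀ z ∈ S, ‖z - P x‖ ≤ ε → (inner ℝ (z - P x) (x - P x) : ℝ) ≤ 0)
    (xstar : EuclideanSpace ℝ (Fin N))
    (hfix : P (xstar - γ • (Matrix.toEuclideanLin Hᵀ (Matrix.toEuclideanLin H xstar))
        + γ • (Matrix.toEuclideanLin Hᵀ y)) = xstar) :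
    ∃ ε > 0, ∀ z ∈ S, ‖z - xstar‖ ≤ ε →
      ‖Matrix.toEuclideanLin H xstar - y‖ ≤ ‖Matrix.toEuclideanLin H z - y‖ :=
  fixed_point_is_local_minimizer_general H y γ hγ S P hlocal xstar hfix
end

section
/- Let S ⊆ ℝ^N and let P : ℝ^N → S be a map with range contained in S satisfying ⟨z − P(x), x − P(x)⟩ ≤ 0 for all x ∈ ℝ^N and all z ∈ S. Then S is convex. -/
open scoped RealInnerProductSpace

/-! The half-space `{z | ⟪z - P x, x - P x⟫ ≤ 0}` is convex and contains `S`, hence contains every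
point `x` of the convex hull of `S`; evaluating at `z = x` gives `‖x - P x‖² ≤ 0`, so `x = P x ∈ S`. -/

theorem eq_of_mem_convexHull_of_inner_sub_nonpos {E : Type*} [NormedAddCommGroup E]
    [InnerProductSpace ℝ E] {S : Set E} {x p : E} (hx : x ∈ convexHull ℝ S)
    (hS : ∀ z ∈ S, ⟪z - p, x - p⟫ ≤ 0) : x = p := by
  have hhalf : Convex ℝ {z : E | ⟪z, x - p⟫ ≤ ⟪p, x - p⟫} :=
    convex_halfSpace_le (innerₛₗ ℝ |>.flip (x - p)).isLinear _
  have hsub : S ⊆ {z : E | ⟪z, x - p⟫ ≤ ⟪p, x - p⟫} := fun z hz =>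
    sub_nonpos.mp (inner_sub_left (𝕜 := ℝ) z p (x - p) ▸ hS z hz)
  have hxp : ⟪x, x - p⟫ ≤ ⟪p, x - p⟫ := convexHull_min hsub hhalf hx
  rw [← sub_nonpos, ← inner_sub_left] at hxp
  exact sub_eq_zero.mp (real_inner_self_nonpos.mp hxp)

/-- If a map `P : ℝ^N → S` satisfies the global obtuse-angle condition
`⟪z - P x, x - P x⟫ ≤ 0` for all `x` and all `z ∈ S`, then `S` is convex. -/
theorem global_obtuse_angle_implies_convex
    {N : ℕ} (S : Set (EuclideanSpace ℝ (Fin N)))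
    (P : EuclideanSpace ℝ (Fin N) → EuclideanSpace ℝ (Fin N))
    (hPS : ∀ x, P x ∈ S)
    (hglobal : ∀ x : EuclideanSpace ℝ (Fin N), ∀ z ∈ S, (inner ℝ (z - P x) (x - P x) : ℝ) ≤ 0) :
    Convex ℝ S := by
  rw [← convexHull_eq_self]
  refine (subset_convexHull ℝ S).antisymm' fun x hx => ?_
  rw [eq_of_mem_convexHull_of_inner_sub_nonpos hx (hglobal x)]
  exact hPS x
end

section
/- Let S = ⋃_{i=1}^n C_i be a finite union of nonempty closed convex sets in ℝ^N, and let P_S be an orthogonal projector onto S (i.e., for every x, P_S(x) ∈ S and ‖x − P_S(x)‖ = inf_{z∈S} ‖x − z‖). Then P_S satisfies the local obtuse-angle condition: for every x ∈ ℝ^N there exists ε > 0 such that ⟨z − P_S(x), x − P_S(x)⟩ ≤ 0 for all z ∈ S with ‖z − P_S(x)‖ ≤ ε. -/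
open scoped RealInnerProductSpace
open Filter Topology

/-!
Near `p = P x` only the sets `C i` that contain `p` are visible, since the finitely many closed
sets missing `p` stay a positive distance away. So any `z ∈ S` close to `p` lies in some convex
`C i ∋ p`, on which `p` is still a nearest point to `x`; the variational inequality for the
projection onto a convex set then gives `⟪z - p, x - p⟫ ≤ 0`.
-/

theorem eventually_forall_mem_imp_mem_of_isClosed {X ι : Type*} [TopologicalSpace X] [Finite ι]
    {C : ι → Set X} (hcl : ∀ i, IsClosed (C i)) (p : X) :
    ∀ᶠ z in 𝓝 p, ∀ i, z ∈ C i → p ∈ C i := by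
  refine eventually_all.2 fun i => ?_
  by_cases hp : p ∈ C i
  · exact Eventually.of_forall fun _ _ => hp
  · filter_upwards [(hcl i).isOpen_compl.mem_nhds hp] with z hz hzi
    exact absurd hzi hz

theorem Convex.real_inner_sub_le_zero_of_forall_norm_sub_le {F : Type*}
    [NormedAddCommGroup F] [InnerProductSpace ℝ F] {K : Set F} (hK : Convex ℝ K)
    {x y : F} (hy : y ∈ K) (hmin : ∀ z ∈ K, ‖x - y‖ ≤ ‖x - z‖) :
    ∀ z ∈ K, ⟪z - y, x - y⟫ ≤ 0 := by
  have : Nonempty K := ⟨⟨y, hy⟩⟩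
  have hbdd : BddBelow (Set.range fun w : K => ‖x - w‖) :=
    ⟨0, Set.forall_mem_range.2 fun _ => norm_nonneg _⟩
  have hinf : ‖x - y‖ = ⨅ w : K, ‖x - w‖ :=
    le_antisymm (le_ciInf fun w => hmin w w.2) (ciInf_le hbdd ⟨y, hy⟩)
  intro z hz
  rw [real_inner_comm]
  exact (norm_eq_iInf_iff_real_inner_le_zero hK hy).1 hinf z hz

theorem orthogonal_projector_union_convex_local_obtuse_general
    {N : ℕ} (n : ℕ) (C : Fin n → Set (EuclideanSpace ℝ (Fin N)))
    (hcl : ∀ i, IsClosed (C i)) (hcv : ∀ i, Convex ℝ (C i))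
    (S : Set (EuclideanSpace ℝ (Fin N))) (hS : S = ⋃ i, C i)
    (P : EuclideanSpace ℝ (Fin N) → EuclideanSpace ℝ (Fin N))
    (hPproj : ∀ x, ∀ z ∈ S, ‖x - P x‖ ≤ ‖x - z‖) :
    ∀ x : EuclideanSpace ℝ (Fin N), ∃ ε > 0,
      ∀ z ∈ S, ‖z - P x‖ ≤ ε → (inner ℝ (z - P x) (x - P x) : ℝ) ≤ 0 := by
  intro x
  obtain ⟨ε, hε, hnear⟩ := Metric.nhds_basis_closedBall.eventually_iff.1
    (eventually_forall_mem_imp_mem_of_isClosed hcl (P x))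
  refine ⟨ε, hε, fun z hz hzε => ?_⟩
  subst hS
  obtain ⟨i, hzi⟩ := Set.mem_iUnion.1 hz
  have hPxi : P x ∈ C i := hnear (mem_closedBall_iff_norm.2 hzε) i hzi
  exact (hcv i).real_inner_sub_le_zero_of_forall_norm_sub_le hPxi
    (fun w hw => hPproj x w (Set.mem_iUnion.2 ⟨i, hw⟩)) z hzi

/-- An orthogonal projector onto a finite union of nonempty closed convex sets
satisfies the local obtuse-angle condition. -/
theorem orthogonal_projector_union_convex_local_obtuse
    {N : ℕ} (n : ℕ) (C : Fin n → Set (EuclideanSpace ℝ (Fin N)))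
    (hne : ∀ i, (C i).Nonempty) (hcl : ∀ i, IsClosed (C i)) (hcv : ∀ i, Convex ℝ (C i))
    (S : Set (EuclideanSpace ℝ (Fin N))) (hS : S = ⋃ i, C i)
    (P : EuclideanSpace ℝ (Fin N) → EuclideanSpace ℝ (Fin N))
    (hPS : ∀ x, P x ∈ S)
    (hPproj : ∀ x, ∀ z ∈ S, ‖x - P x‖ ≤ ‖x - z‖) :
    ∀ x : EuclideanSpace ℝ (Fin N), ∃ ε > 0,
      ∀ z ∈ S, ‖z - P x‖ ≤ ε → (inner ℝ (z - P x) (x - P x) : ℝ) ≤ 0 :=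
  orthogonal_projector_union_convex_local_obtuse_general n C hcl hcv S hS P hPproj
end

section
/- Let H ∈ ℝ^{M×N}, y ∈ ℝ^M, and let λ_max, λ_min be the largest and smallest eigenvalues of HᵀH with λ_max > λ_min ≥ 0. Let P : ℝ^N → ℝ^N be Lipschitz-continuous with constant L < (λ_max + λ_min)/(λ_max − λ_min), and set γ = 2/(λ_max + λ_min). Then the map G(x) = P(x − γHᵀHx + γHᵀy) is a contraction on ℝ^N, and hence the sequence x_{k+1} = G(x_k) converges to the unique fixed point of G for every initialization x_0. -/
open Matrix
open scoped RealInnerProductSpace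

/-!
The affine part `x ↦ x - γHᵀHx + γHᵀy` of `G` has linear part `A = 1 - γHᵀH`, which is
self-adjoint with quadratic form `⟪Ax, x⟫ = ‖x‖² - γ‖Hx‖²`, lying between `(1 - γλmax)‖x‖²` and
`(1 - γλmin)‖x‖²`. The norm of a self-adjoint operator is the supremum of its Rayleigh quotient,
so for `γ = 2/(λmax + λmin)` this gives `‖A‖ ≤ (λmax - λmin)/(λmax + λmin)`. Hence `G` is
`L‖A‖`-Lipschitz with `L‖A‖ < 1`, and the Banach fixed-point theorem applies.
-/

namespace ContinuousLinearMap

variable {E F : Type*} [NormedAddCommGroup E] [InnerProductSpace ℝ E]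
  [NormedAddCommGroup F] [InnerProductSpace ℝ F]

theorem norm_le_of_abs_inner_self_le {T : E →L[ℝ] E} (hT : T.IsSymmetric) {c : ℝ} (hc : 0 ≤ c)
    (h : ∀ x, |⟪T x, x⟫| ≤ c * ‖x‖ ^ 2) : ‖T‖ ≤ c := by
  rw [T.norm_eq_iSup_rayleighQuotient hT]
  refine ciSup_le fun x => ?_
  rcases eq_or_ne x 0 with rfl | hx
  · simpa using hc
  · rw [rayleighQuotient, reApplyInnerSelf_apply, abs_div, abs_sq, div_le_iff₀ (by positivity)]
    simpa using h x

variable [CompleteSpace E] [CompleteSpace F]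

theorem isSymmetric_one_sub_smul_adjoint_comp_self (B : E →L[ℝ] F) (γ : ℝ) :
    (1 - γ • (adjoint B ∘L B)).IsSymmetric := by
  intro x z
  simp [inner_sub_left, inner_sub_right, real_inner_smul_left, real_inner_smul_right,
    adjoint_inner_left, adjoint_inner_right]

theorem inner_one_sub_smul_adjoint_comp_self_apply_self (B : E →L[ℝ] F) (γ : ℝ) (x : E) :
    ⟪(1 - γ • (adjoint B ∘L B)) x, x⟫ = ‖x‖ ^ 2 - γ * ‖B x‖ ^ 2 := by
  simp [inner_sub_left, real_inner_smul_left, adjoint_inner_left]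

theorem norm_one_sub_smul_adjoint_comp_self_le (B : E →L[ℝ] F) {lmin lmax γ : ℝ} (hγ : 0 ≤ γ)
    (hlo : ∀ x, lmin * ‖x‖ ^ 2 ≤ ‖B x‖ ^ 2) (hhi : ∀ x, ‖B x‖ ^ 2 ≤ lmax * ‖x‖ ^ 2) :
    ‖1 - γ • (adjoint B ∘L B)‖ ≤ max |1 - γ * lmin| |1 - γ * lmax| := by
  set c := max |1 - γ * lmin| |1 - γ * lmax|
  refine norm_le_of_abs_inner_self_le (isSymmetric_one_sub_smul_adjoint_comp_self B γ)
    (le_max_of_le_left (abs_nonneg _)) fun x => ?_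
  rw [inner_one_sub_smul_adjoint_comp_self_apply_self, abs_le]
  have hx := sq_nonneg ‖x‖
  constructor
  · calc -(c * ‖x‖ ^ 2) ≤ (1 - γ * lmax) * ‖x‖ ^ 2 := by
          nlinarith [neg_abs_le (1 - γ * lmax), le_max_right |1 - γ * lmin| |1 - γ * lmax|]
      _ ≤ ‖x‖ ^ 2 - γ * ‖B x‖ ^ 2 := by nlinarith [hhi x]
  · calc ‖x‖ ^ 2 - γ * ‖B x‖ ^ 2 ≤ (1 - γ * lmin) * ‖x‖ ^ 2 := by nlinarith [hlo x]
      _ ≤ c * ‖x‖ ^ 2 := by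
          nlinarith [le_abs_self (1 - γ * lmin), le_max_left |1 - γ * lmin| |1 - γ * lmax|]

end ContinuousLinearMap

-- `γ = 2/(a + b)` is the step size that balances the two ends `b ≤ a` of the spectrum.
theorem max_abs_one_sub_two_div_add_mul {a b : ℝ} (hab : 0 < a + b) (hba : b ≤ a) :
    max |1 - 2 / (a + b) * b| |1 - 2 / (a + b) * a| = (a - b) / (a + b) := by
  have hb : 1 - 2 / (a + b) * b = (a - b) / (a + b) := by field_simp; ring
  have ha : 1 - 2 / (a + b) * a = -((a - b) / (a + b)) := by field_simp; ring
  rw [hb, ha, abs_neg, max_self, abs_of_nonneg (div_nonneg (sub_nonneg.mpr hba) hab.le)]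

theorem Matrix.toEuclideanLin_transpose_eq_adjoint {m n : Type*} [Fintype m] [Fintype n]
    [DecidableEq m] [DecidableEq n] (H : Matrix m n ℝ) (v : EuclideanSpace ℝ m) :
    toEuclideanLin Hᵀ v =
      ContinuousLinearMap.adjoint (LinearMap.toContinuousLinearMap (toEuclideanLin H)) v := by
  rw [← LinearMap.adjoint_toContinuousLinearMap, ← toEuclideanLin_conjTranspose_eq_adjoint,
    conjTranspose_eq_transpose_of_trivial]
  rfl

theorem exists_fixedPoint_unique_tendsto_iterate_of_norm_sub_le {E : Type*} [NormedAddCommGroup E]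
    [CompleteSpace E] [Nonempty E] {f : E → E} {κ : ℝ} (hκ0 : 0 ≤ κ) (hκ1 : κ < 1)
    (hf : ∀ x z, ‖f x - f z‖ ≤ κ * ‖x - z‖) :
    ∃ xstar, f xstar = xstar ∧ (∀ w, f w = w → w = xstar) ∧
      ∀ x₀, Filter.Tendsto (fun k => f^[k] x₀) Filter.atTop (nhds xstar) := by
  have hC : ContractingWith ⟨κ, hκ0⟩ f :=
    ⟨hκ1, .of_dist_le_mul fun x z => by rw [dist_eq_norm, dist_eq_norm]; exact hf x z⟩
  exact ⟨hC.fixedPoint f, hC.fixedPoint_isFixedPt, fun _ hw => hC.fixedPoint_unique hw,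
    hC.tendsto_iterate_fixedPoint⟩

/-- If `P` is `L`-Lipschitz with `L < (λmax + λmin)/(λmax - λmin)` and
`γ = 2/(λmax + λmin)`, then `G x = P (x - γHᵀHx + γHᵀy)` is a contraction, and the
Picard iteration converges to the unique fixed point of `G` from any initialization. -/
theorem pgd_converges_to_unique_fixed_point
    {M N : ℕ} (H : Matrix (Fin M) (Fin N) ℝ) (y : EuclideanSpace ℝ (Fin M))
    (lmin lmax : ℝ) (hmin : 0 ≤ lmin) (hlt : lmin < lmax)
    (hlo : ∀ x : EuclideanSpace ℝ (Fin N), lmin * ‖x‖ ^ 2 ≤ ‖Matrix.toEuclideanLin H x‖ ^ 2)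
    (hhi : ∀ x : EuclideanSpace ℝ (Fin N), ‖Matrix.toEuclideanLin H x‖ ^ 2 ≤ lmax * ‖x‖ ^ 2)
    (P : EuclideanSpace ℝ (Fin N) → EuclideanSpace ℝ (Fin N))
    (L : ℝ) (hL0 : 0 ≤ L) (hLip : ∀ x z, ‖P x - P z‖ ≤ L * ‖x - z‖)
    (hLlt : L < (lmax + lmin) / (lmax - lmin))
    (γ : ℝ) (hγ : γ = 2 / (lmax + lmin))
    (G : EuclideanSpace ℝ (Fin N) → EuclideanSpace ℝ (Fin N))
    (hG : ∀ x, G x = P (x - γ • Matrix.toEuclideanLin Hᵀ (Matrix.toEuclideanLin H x)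
        + γ • Matrix.toEuclideanLin Hᵀ y)) :
    (∃ κ : ℝ, 0 ≤ κ ∧ κ < 1 ∧ ∀ x z, ‖G x - G z‖ ≤ κ * ‖x - z‖) ∧
    ∃ xstar, G xstar = xstar ∧ (∀ w, G w = w → w = xstar) ∧
      ∀ x₀ : EuclideanSpace ℝ (Fin N),
        Filter.Tendsto (fun k => G^[k] x₀) Filter.atTop (nhds xstar) := by
  have hsum : 0 < lmax + lmin := by linarith
  have hdiff : 0 < lmax - lmin := by linarith
  set B := LinearMap.toContinuousLinearMap (toEuclideanLin H)
  set A := 1 - γ • (ContinuousLinearMap.adjoint B ∘L B)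
  have hA : ‖A‖ ≤ (lmax - lmin) / (lmax + lmin) := by
    rw [← max_abs_one_sub_two_div_add_mul hsum hlt.le, ← hγ]
    exact B.norm_one_sub_smul_adjoint_comp_self_le (by rw [hγ]; positivity) hlo hhi
  set c := γ • ContinuousLinearMap.adjoint B y
  have hGA : ∀ x, G x = P (A x + c) := fun x => by
    simp [hG, A, B, c, toEuclideanLin_transpose_eq_adjoint, sub_eq_add_neg]
  have hGlip : ∀ x z, ‖G x - G z‖ ≤ L * ‖A‖ * ‖x - z‖ := fun x z =>
    calc ‖G x - G z‖ ≤ L * ‖(A x + c) - (A z + c)‖ := by rw [hGA, hGA]; exact hLip _ _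
      _ = L * ‖A (x - z)‖ := by rw [add_sub_add_right_eq_sub, map_sub]
      _ ≤ L * ‖A‖ * ‖x - z‖ := by
          rw [mul_assoc]; exact mul_le_mul_of_nonneg_left (A.le_opNorm _) hL0
  have hκ1 : L * ‖A‖ < 1 :=
    calc L * ‖A‖ ≤ L * ((lmax - lmin) / (lmax + lmin)) := mul_le_mul_of_nonneg_left hA hL0
      _ < 1 := by
        rw [mul_div_assoc', div_lt_one hsum]
        exact (lt_div_iff₀ hdiff).mp hLlt
  have hκ0 : 0 ≤ L * ‖A‖ := by positivity
  exact ⟨⟨_, hκ0, hκ1, hGlip⟩,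
    exists_fixedPoint_unique_tendsto_iterate_of_norm_sub_le hκ0 hκ1 hGlip⟩
end

section
/- Let G : ℝ^N → ℝ^N be non-expansive with a nonempty set of fixed points, and let α ∈ (0,1). Then for any initialization x_0, the sequence x_{k+1} = (1−α)x_k + α G(x_k) converges to a fixed point of G. -/
/-!
Averaging a non-expansive map `G` makes it strongly quasi-nonexpansive: for every fixed point `z`,
`‖x_{k+1} - z‖² ≤ ‖x_k - z‖² - α(1-α)‖x_k - G x_k‖²`. Hence the iterates are Fejér monotone with
respect to the fixed-point set, so they stay bounded, and the telescoping decrease forces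
`x_k - G x_k → 0`. By compactness some subsequence converges; its limit is a fixed point, and
Fejér monotonicity with respect to that limit upgrades subsequential to full convergence.
-/

open Filter Topology Function

theorem norm_one_sub_smul_add_smul_sq {E : Type*} [NormedAddCommGroup E] [InnerProductSpace ℝ E]
    (α : ℝ) (a b : E) :
    ‖(1 - α) • a + α • b‖ ^ 2 = (1 - α) * ‖a‖ ^ 2 + α * ‖b‖ ^ 2 - α * (1 - α) * ‖a - b‖ ^ 2 := by
  rw [norm_add_sq_real, norm_sub_sq_real, norm_smul, norm_smul, real_inner_smul_left,
    real_inner_smul_right, mul_pow, mul_pow, Real.norm_eq_abs, Real.norm_eq_abs, sq_abs, sq_abs]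
  ring

theorem tendsto_of_antitone_dist_of_tendsto_subseq {X : Type*} [PseudoMetricSpace X]
    {x : ℕ → X} {a : X} {φ : ℕ → ℕ} (hanti : Antitone fun k => dist (x k) a) (hφ : StrictMono φ)
    (hsub : Tendsto (x ∘ φ) atTop (𝓝 a)) : Tendsto x atTop (𝓝 a) := by
  rw [tendsto_iff_dist_tendsto_zero] at hsub ⊢
  exact (tendsto_iff_tendsto_subseq_of_antitone hanti hφ.tendsto_atTop).2 hsub

theorem isFixedPt_of_tendsto_subseq {E : Type*} [NormedAddCommGroup E] {G : E → E}
    (hG : Continuous G) {x : ℕ → E} {a : E} {φ : ℕ → ℕ} (hφ : StrictMono φ)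
    (hsub : Tendsto (x ∘ φ) atTop (𝓝 a)) (hreg : Tendsto (fun k => x k - G (x k)) atTop (𝓝 0)) :
    IsFixedPt G a := by
  have hGsub : Tendsto (fun n => G (x (φ n))) atTop (𝓝 a) := by
    simpa using hsub.sub (hreg.comp hφ.tendsto_atTop)
  exact tendsto_nhds_unique ((hG.tendsto a).comp hsub) hGsub

namespace KrasnoselskiiMann

variable {E : Type*} [NormedAddCommGroup E] [InnerProductSpace ℝ E]
  {G : E → E} {α : ℝ} {z : E} {x : ℕ → E}

theorem norm_sub_fixedPt_sq_le (hG : LipschitzWith 1 G) (hα : 0 ≤ α) (hz : IsFixedPt G z)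
    (u : E) :
    ‖(1 - α) • u + α • G u - z‖ ^ 2 ≤ ‖u - z‖ ^ 2 - α * (1 - α) * ‖u - G u‖ ^ 2 := by
  have hsplit : (1 - α) • u + α • G u - z = (1 - α) • (u - z) + α • (G u - z) := by module
  have hGu : ‖G u - z‖ ≤ ‖u - z‖ := by
    simpa [hz.eq, dist_eq_norm] using hG.dist_le_mul u z
  have hGu_sq : ‖G u - z‖ ^ 2 ≤ ‖u - z‖ ^ 2 := pow_le_pow_left₀ (norm_nonneg _) hGu 2
  rw [hsplit, norm_one_sub_smul_add_smul_sq, sub_sub_sub_cancel_right]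
  nlinarith

variable (hG : LipschitzWith 1 G) (hrec : ∀ k, x (k + 1) = (1 - α) • x k + α • G (x k))
include hG hrec

theorem norm_succ_sub_fixedPt_sq_le (hα : 0 ≤ α) (hz : IsFixedPt G z) (k : ℕ) :
    ‖x (k + 1) - z‖ ^ 2 ≤ ‖x k - z‖ ^ 2 - α * (1 - α) * ‖x k - G (x k)‖ ^ 2 :=
  hrec k ▸ norm_sub_fixedPt_sq_le hG hα hz (x k)

theorem antitone_norm_sub_fixedPt (hα0 : 0 ≤ α) (hα1 : α ≤ 1) (hz : IsFixedPt G z) :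
    Antitone fun k => ‖x k - z‖ := by
  refine antitone_nat_of_succ_le fun k => ?_
  have hdecr : ‖x (k + 1) - z‖ ^ 2 ≤ ‖x k - z‖ ^ 2 := by
    have := norm_succ_sub_fixedPt_sq_le hG hrec hα0 hz k
    have : 0 ≤ α * (1 - α) * ‖x k - G (x k)‖ ^ 2 := by
      have : 0 ≤ 1 - α := by linarith
      positivity
    linarith
  exact pow_le_pow_iff_left₀ (norm_nonneg _) (norm_nonneg _) two_ne_zero |>.1 hdecr

theorem tendsto_sub_map_zero (hα0 : 0 < α) (hα1 : α < 1) (hz : IsFixedPt G z) :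
    Tendsto (fun k => x k - G (x k)) atTop (𝓝 0) := by
  have hc : 0 < α * (1 - α) := mul_pos hα0 (by linarith)
  set d : ℕ → ℝ := fun k => ‖x k - z‖ ^ 2
  have hd_anti : Antitone d := fun m n hmn =>
    pow_le_pow_left₀ (norm_nonneg _) (antitone_norm_sub_fixedPt hG hrec hα0.le hα1.le hz hmn) 2
  have hd_lim : Tendsto d atTop (𝓝 (⨅ k, d k)) :=
    tendsto_atTop_ciInf hd_anti ⟨0, by rintro _ ⟨k, rfl⟩; positivity⟩
  have hdecr : Tendsto (fun k => (d k - d (k + 1)) / (α * (1 - α))) atTop (𝓝 0) := by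
    simpa using (hd_lim.sub (hd_lim.comp (tendsto_add_atTop_nat 1))).div_const (α * (1 - α))
  have hsq : Tendsto (fun k => ‖x k - G (x k)‖ ^ 2) atTop (𝓝 0) := by
    refine squeeze_zero (fun k => by positivity) (fun k => ?_) hdecr
    rw [le_div_iff₀ hc]
    linarith [norm_succ_sub_fixedPt_sq_le hG hrec hα0.le hz k]
  rw [tendsto_zero_iff_norm_tendsto_zero]
  simpa [Real.sqrt_sq (norm_nonneg _)] using hsq.sqrt

theorem exists_isFixedPt_tendsto [ProperSpace E] (hα0 : 0 < α) (hα1 : α < 1)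
    (hfix : ∃ w, IsFixedPt G w) : ∃ a, IsFixedPt G a ∧ Tendsto x atTop (𝓝 a) := by
  obtain ⟨w, hw⟩ := hfix
  have hbdd : ∀ k, x k ∈ Metric.closedBall w ‖x 0 - w‖ := fun k => by
    rw [Metric.mem_closedBall, dist_eq_norm]
    exact antitone_norm_sub_fixedPt hG hrec hα0.le hα1.le hw (Nat.zero_le k)
  obtain ⟨a, -, φ, hφ, hsub⟩ := (isCompact_closedBall w _).tendsto_subseq hbdd
  have ha : IsFixedPt G a := isFixedPt_of_tendsto_subseq hG.continuous hφ hsub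
    (tendsto_sub_map_zero hG hrec hα0 hα1 hw)
  refine ⟨a, ha, tendsto_of_antitone_dist_of_tendsto_subseq ?_ hφ hsub⟩
  simpa only [dist_eq_norm] using antitone_norm_sub_fixedPt hG hrec hα0.le hα1.le ha

end KrasnoselskiiMann

/-- Krasnosel'skiĭ–Mann in finite dimensions: if `G : ℝ^N → ℝ^N` is non-expansive with a
nonempty fixed-point set and `α ∈ (0,1)`, then the averaged iteration
`x_{k+1} = (1-α)x_k + α G(x_k)` converges to a fixed point of `G`. -/
theorem krasnoselskii_mann_averaged_iteration_converges
    {N : ℕ} (G : EuclideanSpace ℝ (Fin N) → EuclideanSpace ℝ (Fin N))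
    (hG : ∀ x z, ‖G x - G z‖ ≤ ‖x - z‖)
    (hfix : ∃ w, G w = w)
    (α : ℝ) (hα0 : 0 < α) (hα1 : α < 1)
    (x : ℕ → EuclideanSpace ℝ (Fin N))
    (hrec : ∀ k, x (k + 1) = (1 - α) • x k + α • G (x k)) :
    ∃ xstar, G xstar = xstar ∧ Filter.Tendsto x Filter.atTop (nhds xstar) := by
  have hLip : LipschitzWith 1 G :=
    LipschitzWith.of_dist_le_mul fun u v => by simpa [dist_eq_norm] using hG u v
  exact KrasnoselskiiMann.exists_isFixedPt_tendsto hLip hrec hα0 hα1 hfix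
end

section
/- Consider the relaxed projected gradient descent: given F : ℝ^N → ℝ^N, γ > 0, x_0 ∈ ℝ^N, α_0 ∈ (0,1], and positive reals {c_k} with c_k ≤ C < 1 for all sufficiently large k, define z_k = F(x_k − γHᵀHx_k + γHᵀy), α_k = c_k (‖z_{k−1} − x_{k−1}‖/‖z_k − x_k‖) α_{k−1} if ‖z_k − x_k‖ > c_k ‖z_{k−1} − x_{k−1}‖, else α_k = α_{k−1} (that is, α_k = min(α_{k−1}, c_k ‖z_{k−1} − x_{k−1}‖/‖z_k − x_k‖ · α_{k−1})), and x_{k+1} = (1−α_k)x_k + α_k z_k. Then, for any map F, the sequence {x_k} converges to some x* ∈ ℝ^N. -/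
open Matrix

/-- Convergence of relaxed projected gradient descent (RPGD): with the adaptive relaxation
rule, the iterates `x_k` converge for any map `F`. -/
theorem rpgd_converges
    {M N : ℕ} (H : Matrix (Fin M) (Fin N) ℝ) (y : EuclideanSpace ℝ (Fin M))
    (F : EuclideanSpace ℝ (Fin N) → EuclideanSpace ℝ (Fin N))
    (γ : ℝ) (hγ : 0 < γ)
    (c : ℕ → ℝ) (C : ℝ) (hC : C < 1) (hcpos : ∀ k, 0 < c k)
    (hcC : ∃ K, ∀ k ≥ K, c k ≤ C)
    (x z : ℕ → EuclideanSpace ℝ (Fin N)) (α : ℕ → ℝ)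
    (hα0 : 0 < α 0 ∧ α 0 ≤ 1)
    (hz : ∀ k, z k = F (x k - γ • Matrix.toEuclideanLin Hᵀ (Matrix.toEuclideanLin H (x k))
        + γ • Matrix.toEuclideanLin Hᵀ y))
    (hα : ∀ k ≥ 1, α k =
      if ‖z k - x k‖ > c k * ‖z (k - 1) - x (k - 1)‖
      then c k * (‖z (k - 1) - x (k - 1)‖ / ‖z k - x k‖) * α (k - 1)
      else α (k - 1))
    (hx : ∀ k, x (k + 1) = (1 - α k) • x k + α k • z k) :
    ∃ xstar, Filter.Tendsto x Filter.atTop (nhds xstar) := by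

  obtain ⟨K, hK⟩ := hcC
  obtain ⟨hα0pos, _⟩ := hα0
  set d : ℕ → ℝ := fun k => α k * ‖z k - x k‖ with hd
  -- α nonneg
  have hαnn : ∀ k, 0 ≤ α k := by
    intro k
    induction k with
    | zero => exact hα0pos.le
    | succ n ih =>
      have h := hα (n+1) (Nat.le_add_left 1 n)
      simp only [Nat.add_sub_cancel] at h
      rw [h]
      split
      · exact mul_nonneg (mul_nonneg (hcpos _).le (div_nonneg (norm_nonneg _) (norm_nonneg _))) ih
      · exact ih
  have hdnn : ∀ k, 0 ≤ d k := fun k => mul_nonneg (hαnn k) (norm_nonneg _)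
  -- key contraction
  have hdle : ∀ k, d (k+1) ≤ c (k+1) * d k := by
    intro k
    have h := hα (k+1) (Nat.le_add_left 1 k)
    simp only [Nat.add_sub_cancel] at h
    by_cases hcase : ‖z (k+1) - x (k+1)‖ > c (k+1) * ‖z k - x k‖
    · rw [if_pos hcase] at h
      have hb : ‖z (k+1) - x (k+1)‖ ≠ 0 := by
        have : 0 ≤ c (k+1) * ‖z k - x k‖ := mul_nonneg (hcpos _).le (norm_nonneg _)
        exact ne_of_gt (lt_of_le_of_lt this hcase)
      have : d (k+1) = c (k+1) * ‖z k - x k‖ * α k := by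
        simp only [hd, h]
        field_simp
      rw [this]
      exact le_of_eq (by simp only [hd]; ring)
    · rw [if_neg hcase] at h
      push_neg at hcase
      have : d (k+1) = α k * ‖z (k+1) - x (k+1)‖ := by simp [hd, h]
      rw [this]
      calc α k * ‖z (k+1) - x (k+1)‖ ≤ α k * (c (k+1) * ‖z k - x k‖) :=
            mul_le_mul_of_nonneg_left hcase (hαnn k)
        _ = c (k+1) * d k := by simp [hd]; ring
  have hCpos : 0 < C := lt_of_lt_of_le (hcpos (K+1)) (hK (K+1) (Nat.le_succ K))
  -- summability of d
  have hsum : Summable d := by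
    apply summable_of_ratio_norm_eventually_le hC
    filter_upwards [Filter.eventually_ge_atTop K] with n hn
    rw [Real.norm_of_nonneg (hdnn (n+1)), Real.norm_of_nonneg (hdnn n)]
    calc d (n+1) ≤ c (n+1) * d n := hdle n
      _ ≤ C * d n := mul_le_mul_of_nonneg_right (hK (n+1) (le_trans hn (Nat.le_succ n))) (hdnn n)
  -- step size equals d
  have hstep : ∀ n, dist (x n) (x (n+1)) ≤ d n := by
    intro n
    have : x (n+1) - x n = α n • (z n - x n) := by
      rw [hx n]
      module
    rw [dist_comm, dist_eq_norm, this, norm_smul, Real.norm_of_nonneg (hαnn n)]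
  have hcauchy : CauchySeq x := cauchySeq_of_dist_le_of_summable d hstep hsum
  exact cauchySeq_tendsto_of_complete hcauchy
end
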